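/- arXiv:0902.2316 — 3 statements merged into one kernel-verified Lean document; each statement's English description precedes it below -/
import Mathlib

section
/- Let C ⊆ {0,1}^n be a code with minimum distance at least 6 containing x of weight i, and let m, l, k be three distinct coordinates in supp(x). If u, v ∈ C are distinct codewords at distance 6 from x, both having zeros in coordinates m, l, k, then u and v share no common zero coordinate in supp(x) \ {m,l,k} and share no common coordinate equal to one outside supp(x). -/
open Finset

def supp {n : ℕ} (x : Fin n → ZMod 2) : Finset (Fin n) :=
  Finset.univ.filter (fun i => x i ≠ 0)

theorem stmt2 {n : ℕ} (C : Set (Fin n → ZMod 2))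
    (hmin : ∀ u ∈ C, ∀ v ∈ C, u ≠ v → 6 ≤ hammingDist u v)
    (x : Fin n → ZMod 2) (hx : x ∈ C) (i : ℕ) (hxi : hammingNorm x = i)
    (m l k : Fin n) (hm : m ∈ supp x) (hl : l ∈ supp x) (hk : k ∈ supp x)
    (hml : m ≠ l) (hmk : m ≠ k) (hlk : l ≠ k)
    (u v : Fin n → ZMod 2) (hu : u ∈ C) (hv : v ∈ C) (huv : u ≠ v)
    (hdu : hammingDist x u = 6) (hdv : hammingDist x v = 6)
    (hum : u m = 0) (hul : u l = 0) (huk : u k = 0)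
    (hvm : v m = 0) (hvl : v l = 0) (hvk : v k = 0) :
    (∀ j ∈ supp x \ {m, l, k}, ¬(u j = 0 ∧ v j = 0)) ∧
    (∀ j, j ∉ supp x → ¬(u j = 1 ∧ v j = 1)) := by
  have hxm : x m ≠ 0 := by simpa [supp] using hm
  have hxl : x l ≠ 0 := by simpa [supp] using hl
  have hxk : x k ≠ 0 := by simpa [supp] using hk
  have zmod2 : ∀ a b c : ZMod 2, a ≠ b → a ≠ c → b = c := by decide
  have key : ∀ j : Fin n, j ≠ m → j ≠ l → j ≠ k → x j ≠ u j → x j ≠ v j → False := by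
    intro j hjm hjl hjk hju hjv
    have huvd := hmin u hu v hv huv
    classical
    set Du := Finset.univ.filter (fun t => x t ≠ u t) with hDu
    set Dv := Finset.univ.filter (fun t => x t ≠ v t) with hDv
    unfold hammingDist at hdu hdv huvd
    have hcardDu : Du.card = 6 := hdu
    have hcardDv : Dv.card = 6 := hdv
    have hsub : ({j, m, l, k} : Finset (Fin n)) ⊆ Du ∩ Dv := by
      intro t ht
      simp only [Finset.mem_insert, Finset.mem_singleton] at ht
      simp only [hDu, hDv, Finset.mem_inter, Finset.mem_filter, Finset.mem_univ, true_and]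
      rcases ht with rfl | rfl | rfl | rfl
      · exact ⟨hju, hjv⟩
      · exact ⟨by rw [hum]; exact hxm, by rw [hvm]; exact hxm⟩
      · exact ⟨by rw [hul]; exact hxl, by rw [hvl]; exact hxl⟩
      · exact ⟨by rw [huk]; exact hxk, by rw [hvk]; exact hxk⟩
    have hcard4 : ({j, m, l, k} : Finset (Fin n)).card = 4 := by
      rw [Finset.card_insert_of_notMem (by simp [hjm, hjl, hjk]),
        Finset.card_insert_of_notMem (by simp [hml, hmk]),
        Finset.card_insert_of_notMem (by simp [hlk]), Finset.card_singleton]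
    have h4 : 4 ≤ (Du ∩ Dv).card := hcard4 ▸ Finset.card_le_card hsub
    have hdist : (Finset.univ.filter (fun t => u t ≠ v t)).card ≤ (symmDiff Du Dv).card := by
      apply Finset.card_le_card
      intro t ht
      simp only [Finset.mem_filter, Finset.mem_univ, true_and] at ht
      simp only [Finset.mem_symmDiff, hDu, hDv, Finset.mem_filter, Finset.mem_univ, true_and,
        not_not]
      by_cases h : x t = u t
      · exact Or.inr ⟨fun h2 => ht (h.symm.trans h2), h⟩
      · exact Or.inl ⟨h, by by_contra h2; exact ht (zmod2 _ _ _ h h2)⟩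
    have hsd : (symmDiff Du Dv).card + (Du ∩ Dv).card = (Du ∪ Dv).card := by
      rw [symmDiff_eq_sup_sdiff_inf]
      exact Finset.card_sdiff_add_card_eq_card Finset.inter_subset_union
    have hui : (Du ∪ Dv).card + (Du ∩ Dv).card = Du.card + Dv.card :=
      Finset.card_union_add_card_inter _ _
    omega
  constructor
  · rintro j hj ⟨hju, hjv⟩
    simp only [Finset.mem_sdiff, Finset.mem_insert, Finset.mem_singleton, supp,
      Finset.mem_filter, Finset.mem_univ, true_and] at hj
    obtain ⟨hxj, hjs⟩ := hj
    push_neg at hjs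
    exact key j hjs.1 hjs.2.1 hjs.2.2 (hju ▸ hxj) (hjv ▸ hxj)
  · rintro j hj ⟨hju, hjv⟩
    simp only [supp, Finset.mem_filter, Finset.mem_univ, true_and, not_not] at hj
    have h1 : (0 : ZMod 2) ≠ 1 := by decide
    refine key j ?_ ?_ ?_ (by rw [hj, hju]; exact h1) (by rw [hj, hjv]; exact h1)
    · rintro rfl; rw [hju] at hum; exact h1 hum.symm
    · rintro rfl; rw [hju] at hul; exact h1 hul.symm
    · rintro rfl; rw [hju] at huk; exact h1 huk.symm
end

section
/- Any binary constant-weight code of length 10 with all codewords of weight 5 and pairwise Hamming distance at least 6 has at most 6 codewords. In particular it has fewer than 12 codewords. -/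
open Finset

set_option maxRecDepth 4000
set_option maxHeartbeats 1000000

/-- support of a codeword -/
private def Tset (c : Fin 10 → ZMod 2) : Finset (Fin 10) :=
  Finset.univ.filter (fun i => c i = 1)

private lemma tset_card {c : Fin 10 → ZMod 2} (h : hammingNorm c = 5) :
    (Tset c).card = 5 := by
  rw [← h, hammingNorm, Tset]
  congr 1
  ext i
  simp only [mem_filter, mem_univ, true_and]
  have : ∀ a : ZMod 2, a = 1 ↔ a ≠ 0 := by decide
  exact this (c i)

private lemma inter_card_le {c c' : Fin 10 → ZMod 2} (hc : hammingNorm c = 5)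
    (hc' : hammingNorm c' = 5) (hdist : 6 ≤ hammingDist c c') :
    (Tset c ∩ Tset c').card ≤ 2 := by
  have key : ∀ a b : ZMod 2, a ≠ b ↔ ((a = 1 ∧ ¬ b = 1) ∨ (b = 1 ∧ ¬ a = 1)) := by
    decide
  have hsd : hammingDist c c' = (symmDiff (Tset c) (Tset c')).card := by
    rw [hammingDist]
    congr 1
    ext i
    simp only [mem_filter, mem_univ, true_and, Finset.mem_symmDiff, Tset]
    rw [key]
  have hsub : Tset c ∩ Tset c' ⊆ Tset c ∪ Tset c' :=
    (Finset.inter_subset_left).trans Finset.subset_union_left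
  have h1 : (symmDiff (Tset c) (Tset c')).card
      = (Tset c ∪ Tset c').card - (Tset c ∩ Tset c').card := by
    rw [symmDiff_eq_sup_sdiff_inf, Finset.sup_eq_union, Finset.inf_eq_inter]
    exact Finset.card_sdiff_of_subset hsub
  have h2 : (Tset c ∪ Tset c').card + (Tset c ∩ Tset c').card
      = (Tset c).card + (Tset c').card := Finset.card_union_add_card_inter _ _
  have h3 := Finset.card_le_card hsub
  have := tset_card hc
  have := tset_card hc'
  omega

private lemma dc1 {α β : Type*} [DecidableEq α] [DecidableEq β]
    (A : Finset α) (B : Finset β) (P : α → β → Prop) [∀ a b, Decidable (P a b)] :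
    ∑ a ∈ A, (B.filter (fun b => P a b)).card
      = ∑ b ∈ B, (A.filter (fun a => P a b)).card := by
  simp_rw [Finset.card_filter]
  exact Finset.sum_comm

private lemma dc2 {α β : Type*} [DecidableEq α] [DecidableEq β]
    (A : Finset α) (B : Finset β) (P : α → β → Prop) [∀ a b, Decidable (P a b)] :
    ∑ b ∈ B, (A.filter (fun a => P a b)).card * (A.filter (fun a => P a b)).card
      = ∑ a ∈ A, ∑ a' ∈ A, (B.filter (fun b => P a b ∧ P a' b)).card := by
  have boole : ∀ (p q : Prop) [Decidable p] [Decidable q],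
      (if p then (1:ℕ) else 0) * (if q then 1 else 0) = if p ∧ q then 1 else 0 := by
    intro p q _ _
    split_ifs <;> simp_all
  simp_rw [Finset.card_filter, Finset.sum_mul_sum, boole]
  rw [Finset.sum_comm]
  refine Finset.sum_congr rfl fun a _ => ?_
  exact Finset.sum_comm

private lemma hfe1 (c : Fin 10 → ZMod 2) :
    (Finset.univ.offDiag : Finset (Fin 10 × Fin 10)).filter
      (fun p => p.1 ∈ Tset c ∧ p.2 ∈ Tset c) = (Tset c).offDiag := by
  ext p
  simp only [Finset.mem_filter, Finset.mem_offDiag, Finset.mem_univ, true_and]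
  tauto

private lemma hfe2 (c c' : Fin 10 → ZMod 2) :
    (Finset.univ.offDiag : Finset (Fin 10 × Fin 10)).filter
      (fun p => (p.1 ∈ Tset c ∧ p.2 ∈ Tset c) ∧ (p.1 ∈ Tset c' ∧ p.2 ∈ Tset c'))
    = (Tset c ∩ Tset c').offDiag := by
  ext p
  simp only [Finset.mem_filter, Finset.mem_offDiag, Finset.mem_univ, true_and,
    Finset.mem_inter]
  tauto

theorem stmt8 (C : Finset (Fin 10 → ZMod 2))
    (hw : ∀ x ∈ C, hammingNorm x = 5)
    (hd : ∀ x ∈ C, ∀ y ∈ C, x ≠ y → 6 ≤ hammingDist x y) :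
    C.card ≤ 6 ∧ C.card < 12 := by
  have h6 : C.card ≤ 6 := by
    by_contra hcard
    push_neg at hcard
    obtain ⟨D, hDC, hD7⟩ := Finset.exists_subset_card_eq (hcard : 7 ≤ C.card)
    have hT5 : ∀ c ∈ D, (Tset c).card = 5 := fun c hc => tset_card (hw c (hDC hc))
    have hI2 : ∀ c ∈ D, ∀ c' ∈ D, c ≠ c' → (Tset c ∩ Tset c').card ≤ 2 :=
      fun c hc c' hc' hne =>
        inter_card_le (hw c (hDC hc)) (hw c' (hDC hc'))
          (hd c (hDC hc) c' (hDC hc') hne)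
    have hScard : (Finset.univ.offDiag : Finset (Fin 10 × Fin 10)).card = 90 := by
      rw [Finset.offDiag_card]; simp
    -- μ p := number of codewords whose support contains both coordinates of p
    -- first moment
    have hsum1 : ∑ p ∈ (Finset.univ.offDiag : Finset (Fin 10 × Fin 10)),
        (D.filter (fun c => p.1 ∈ Tset c ∧ p.2 ∈ Tset c)).card = 140 := by
      rw [dc1]
      have heach : ∀ c ∈ D, ((Finset.univ.offDiag : Finset (Fin 10 × Fin 10)).filter
          (fun p => p.1 ∈ Tset c ∧ p.2 ∈ Tset c)).card = 20 := by
        intro c hc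
        rw [hfe1, Finset.offDiag_card, hT5 c hc]
      rw [Finset.sum_congr rfl heach]
      simp [hD7]
    -- second moment upper bound
    have hsum2 : ∑ p ∈ (Finset.univ.offDiag : Finset (Fin 10 × Fin 10)),
        (D.filter (fun c => p.1 ∈ Tset c ∧ p.2 ∈ Tset c)).card *
          (D.filter (fun c => p.1 ∈ Tset c ∧ p.2 ∈ Tset c)).card ≤ 224 := by
      rw [dc2 D (Finset.univ.offDiag : Finset (Fin 10 × Fin 10))
        (fun c p => p.1 ∈ Tset c ∧ p.2 ∈ Tset c)]
      have hbound : ∀ c ∈ D, ∀ c' ∈ D,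
          ((Finset.univ.offDiag : Finset (Fin 10 × Fin 10)).filter
            (fun p => (p.1 ∈ Tset c ∧ p.2 ∈ Tset c) ∧ (p.1 ∈ Tset c' ∧ p.2 ∈ Tset c'))).card
          ≤ if c = c' then 20 else 2 := by
        intro c hc c' hc'
        rw [hfe2, Finset.offDiag_card]
        split_ifs with h
        · subst h
          rw [Finset.inter_self, hT5 c hc]
        · have hk := hI2 c hc c' hc' h
          set k := (Tset c ∩ Tset c').card
          interval_cases k <;> norm_num
      calc ∑ c ∈ D, ∑ c' ∈ D, ((Finset.univ.offDiag : Finset (Fin 10 × Fin 10)).filter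
            (fun p => (p.1 ∈ Tset c ∧ p.2 ∈ Tset c) ∧ (p.1 ∈ Tset c' ∧ p.2 ∈ Tset c'))).card
          ≤ ∑ c ∈ D, ∑ c' ∈ D, (if c = c' then 20 else 2) :=
            Finset.sum_le_sum fun c hc => Finset.sum_le_sum fun c' hc' =>
              hbound c hc c' hc'
        _ = 224 := by
            have hinner : ∀ c ∈ D, ∑ c' ∈ D, (if c = c' then (20:ℕ) else 2) = 32 := by
              intro c hc
              have : ∀ c' : Fin 10 → ZMod 2, (if c = c' then (20:ℕ) else 2)
                  = 2 + (if c = c' then 18 else 0) := by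
                intro c'; split_ifs <;> omega
              simp_rw [this]
              rw [Finset.sum_add_distrib, Finset.sum_const, Finset.sum_ite_eq]
              simp [hD7, hc]
            rw [Finset.sum_congr rfl hinner]
            simp [hD7]
    -- convexity lower bound: 3n ≤ n² + 2 for naturals
    have hlow : ∀ n : ℕ, 3 * n ≤ n * n + 2 := by
      intro n
      rcases n with _ | _ | n
      · omega
      · omega
      · nlinarith
    have hcontr : 3 * 140 ≤ 224 + 2 * 90 := by
      calc 3 * 140 = ∑ p ∈ (Finset.univ.offDiag : Finset (Fin 10 × Fin 10)),
            3 * (D.filter (fun c => p.1 ∈ Tset c ∧ p.2 ∈ Tset c)).card := by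
            rw [← Finset.mul_sum, hsum1]
        _ ≤ ∑ p ∈ (Finset.univ.offDiag : Finset (Fin 10 × Fin 10)),
            ((D.filter (fun c => p.1 ∈ Tset c ∧ p.2 ∈ Tset c)).card *
              (D.filter (fun c => p.1 ∈ Tset c ∧ p.2 ∈ Tset c)).card + 2) :=
            Finset.sum_le_sum fun p _ => hlow _
        _ = (∑ p ∈ (Finset.univ.offDiag : Finset (Fin 10 × Fin 10)),
            (D.filter (fun c => p.1 ∈ Tset c ∧ p.2 ∈ Tset c)).card *
              (D.filter (fun c => p.1 ∈ Tset c ∧ p.2 ∈ Tset c)).card)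
            + 2 * (Finset.univ.offDiag : Finset (Fin 10 × Fin 10)).card := by
            rw [Finset.sum_add_distrib, Finset.sum_const, smul_eq_mul, Nat.mul_comm]
        _ ≤ 224 + 2 * 90 := by rw [hScard]; omega
    omega
  exact ⟨h6, by omega⟩
end

section
/- Any binary constant-weight code of length 11 with all codewords of weight 6 and pairwise Hamming distance at least 6 has at most 11 codewords. In particular it has fewer than 21 codewords. -/
open Finset

-- Packing lemma: 4-sets in a ground set of ≤ 10 points with pairwise
-- intersections of size ≤ 1: at most 5 of them.
lemma packA {α : Type*} [DecidableEq α] (V : Finset α) (F : Finset (Finset α))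
    (hV : V.card ≤ 10)
    (hB : ∀ B ∈ F, B ⊆ V ∧ B.card = 4)
    (hI : ∀ B ∈ F, ∀ B' ∈ F, B ≠ B' → (B ∩ B').card ≤ 1) :
    F.card ≤ 5 := by
  by_contra h
  push_neg at h
  -- incidence double count
  have hsum : ∑ B ∈ F, B.card = ∑ x ∈ V, (F.filter (fun B => x ∈ B)).card := by
    have h1 : ∀ B ∈ F, B.card = ∑ x ∈ V, (if x ∈ B then 1 else 0) := by
      intro B hBF
      have h2 : V.filter (fun x => x ∈ B) = B := by
        ext a
        simp only [mem_filter]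
        exact ⟨fun h => h.2, fun h => ⟨(hB B hBF).1 h, h⟩⟩
      calc B.card = (V.filter (fun x => x ∈ B)).card := by rw [h2]
        _ = ∑ x ∈ V, (if x ∈ B then 1 else 0) := card_filter _ _
    rw [Finset.sum_congr rfl h1, Finset.sum_comm]
    exact Finset.sum_congr rfl fun x _ => (card_filter _ _).symm
  have htot : ∑ B ∈ F, B.card = 4 * F.card := by
    rw [Finset.sum_congr rfl (fun B hBF => (hB B hBF).2), Finset.sum_const]
    ring
  -- pigeonhole: some x in at least 3 blocks
  have hx : ∃ x ∈ V, 3 ≤ (F.filter (fun B => x ∈ B)).card := by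
    by_contra hno
    push_neg at hno
    have h5 : ∑ x ∈ V, (F.filter (fun B => x ∈ B)).card ≤ ∑ _x ∈ V, 2 :=
      Finset.sum_le_sum fun x hxV => by have := hno x hxV; omega
    rw [Finset.sum_const, smul_eq_mul] at h5
    omega
  obtain ⟨x, hxV, hx3⟩ := hx
  obtain ⟨S, hSsub, hScard⟩ := Finset.exists_subset_card_eq hx3
  obtain ⟨A1, A2, A3, h12, h13, h23, hSeq⟩ := Finset.card_eq_three.mp hScard
  have hmem : ∀ A ∈ S, A ∈ F ∧ x ∈ A := by
    intro A hA
    have := hSsub hA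
    simp only [mem_filter] at this
    exact this
  have hA1 := hmem A1 (by rw [hSeq]; simp)
  have hA2 := hmem A2 (by rw [hSeq]; simp)
  have hA3 := hmem A3 (by rw [hSeq]; simp)
  -- pairwise intersections are exactly {x}
  have hinter : ∀ A A' : Finset α, A ∈ F → A' ∈ F → A ≠ A' → x ∈ A → x ∈ A' →
      A ∩ A' = {x} := by
    intro A A' hA hA' hne hxA hxA'
    have hsub : {x} ⊆ A ∩ A' := by
      intro a ha
      simp only [mem_singleton] at ha
      subst ha
      exact mem_inter.mpr ⟨hxA, hxA'⟩
    exact (Finset.eq_of_subset_of_card_le hsub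
      (le_trans (hI A hA A' hA' hne) (by simp))).symm
  have hTd : ∀ (A A' : Finset α), A ∩ A' = {x} →
      Disjoint (A.erase x) (A'.erase x) := by
    intro A A' hAA
    rw [Finset.disjoint_left]
    intro a ha ha'
    have : a ∈ A ∩ A' := mem_inter.mpr ⟨mem_of_mem_erase ha, mem_of_mem_erase ha'⟩
    rw [hAA, mem_singleton] at this
    exact (ne_of_mem_erase ha) this
  have hd12 := hTd A1 A2 (hinter _ _ hA1.1 hA2.1 h12 hA1.2 hA2.2)
  have hd13 := hTd A1 A3 (hinter _ _ hA1.1 hA3.1 h13 hA1.2 hA3.2)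
  have hd23 := hTd A2 A3 (hinter _ _ hA2.1 hA3.1 h23 hA2.2 hA3.2)
  have e1 : (A1.erase x).card = 3 := by
    rw [card_erase_of_mem hA1.2, (hB _ hA1.1).2]
  have e2 : (A2.erase x).card = 3 := by
    rw [card_erase_of_mem hA2.2, (hB _ hA2.1).2]
  have e3 : (A3.erase x).card = 3 := by
    rw [card_erase_of_mem hA3.2, (hB _ hA3.1).2]
  have hdU : Disjoint (A1.erase x ∪ A2.erase x) (A3.erase x) :=
    Finset.disjoint_union_left.mpr ⟨hd13, hd23⟩
  have hUcard : (A1.erase x ∪ A2.erase x ∪ A3.erase x).card = 9 := by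
    rw [card_union_of_disjoint hdU, card_union_of_disjoint hd12, e1, e2, e3]
  have hxU : x ∉ A1.erase x ∪ A2.erase x ∪ A3.erase x := by
    simp
  have hsubV : insert x (A1.erase x ∪ A2.erase x ∪ A3.erase x) ⊆ V := by
    intro a ha
    rcases mem_insert.mp ha with rfl | ha
    · exact hxV
    rcases mem_union.mp ha with ha | ha
    · rcases mem_union.mp ha with ha | ha
      · exact (hB _ hA1.1).1 (mem_of_mem_erase ha)
      · exact (hB _ hA2.1).1 (mem_of_mem_erase ha)
    · exact (hB _ hA3.1).1 (mem_of_mem_erase ha)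
  have hVeq : insert x (A1.erase x ∪ A2.erase x ∪ A3.erase x) = V := by
    refine Finset.eq_of_subset_of_card_le hsubV ?_
    rw [card_insert_of_notMem hxU, hUcard]
    exact hV
  -- a fourth block
  have hBnotsub : ¬ F ⊆ ({A1, A2, A3} : Finset (Finset α)) := by
    intro hsub
    have := Finset.card_le_card hsub
    have h3 : ({A1, A2, A3} : Finset (Finset α)).card ≤ 3 :=
      le_trans (card_insert_le _ _) (by
        exact Nat.succ_le_succ (le_trans (card_insert_le _ _) (by simp)))
    omega
  obtain ⟨B, hBF, hBno⟩ := Finset.not_subset.mp hBnotsub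
  simp only [mem_insert, mem_singleton, not_or] at hBno
  obtain ⟨hne1, hne2, hne3⟩ := hBno
  have hBV := (hB B hBF).1
  have hBc := (hB B hBF).2
  by_cases hxB : x ∈ B
  · -- B meets each Ai exactly in x, so B ⊆ {x}
    have i1 := hinter B A1 hBF hA1.1 hne1 hxB hA1.2
    have i2 := hinter B A2 hBF hA2.1 hne2 hxB hA2.2
    have i3 := hinter B A3 hBF hA3.1 hne3 hxB hA3.2
    have : B.erase x = ∅ := by
      rw [Finset.eq_empty_iff_forall_notMem]
      intro a ha
      have haB := mem_of_mem_erase ha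
      have hax := ne_of_mem_erase ha
      have haV : a ∈ V := hBV haB
      rw [← hVeq] at haV
      rcases mem_insert.mp haV with rfl | haU
      · exact hax rfl
      have : a = x := by
        rcases mem_union.mp haU with hU | hU
        · rcases mem_union.mp hU with hU | hU
          · have : a ∈ B ∩ A1 := mem_inter.mpr ⟨haB, mem_of_mem_erase hU⟩
            rw [i1, mem_singleton] at this; exact this
          · have : a ∈ B ∩ A2 := mem_inter.mpr ⟨haB, mem_of_mem_erase hU⟩
            rw [i2, mem_singleton] at this; exact this
        · have : a ∈ B ∩ A3 := mem_inter.mpr ⟨haB, mem_of_mem_erase hU⟩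
          rw [i3, mem_singleton] at this; exact this
      exact hax this
    have hce : (B.erase x).card = 3 := by rw [card_erase_of_mem hxB, hBc]
    rw [this] at hce
    simp at hce
  · -- B avoids x, so B is covered by the three triples, each in ≤ 1 point
    have hBU : B ⊆ A1.erase x ∪ A2.erase x ∪ A3.erase x := by
      intro a ha
      have haV : a ∈ V := hBV ha
      rw [← hVeq] at haV
      rcases mem_insert.mp haV with rfl | haU
      · exact absurd ha hxB
      · exact haU
    have hcover : B = (B ∩ A1.erase x) ∪ (B ∩ A2.erase x) ∪ (B ∩ A3.erase x) := by
      rw [← Finset.inter_union_distrib_left, ← Finset.inter_union_distrib_left]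
      exact (Finset.inter_eq_left.mpr hBU).symm
    have hle : B.card ≤ (B ∩ A1.erase x).card + (B ∩ A2.erase x).card
        + (B ∩ A3.erase x).card := by
      calc B.card = ((B ∩ A1.erase x) ∪ (B ∩ A2.erase x) ∪ (B ∩ A3.erase x)).card := by
            rw [← hcover]
        _ ≤ ((B ∩ A1.erase x) ∪ (B ∩ A2.erase x)).card + (B ∩ A3.erase x).card :=
            card_union_le _ _
        _ ≤ (B ∩ A1.erase x).card + (B ∩ A2.erase x).card + (B ∩ A3.erase x).card :=
            Nat.add_le_add_right (card_union_le _ _) _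
    have hb1 : (B ∩ A1.erase x).card ≤ 1 :=
      le_trans (card_le_card (inter_subset_inter (Finset.Subset.refl B) (erase_subset _ _)))
        (hI B hBF A1 hA1.1 hne1)
    have hb2 : (B ∩ A2.erase x).card ≤ 1 :=
      le_trans (card_le_card (inter_subset_inter (Finset.Subset.refl B) (erase_subset _ _)))
        (hI B hBF A2 hA2.1 hne2)
    have hb3 : (B ∩ A3.erase x).card ≤ 1 :=
      le_trans (card_le_card (inter_subset_inter (Finset.Subset.refl B) (erase_subset _ _)))
        (hI B hBF A3 hA3.1 hne3)
    omega

-- 5-sets in an 11-point ground set with pairwise intersections ≤ 2: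
-- at most 11 of them.
lemma packB (D : Finset (Finset (Fin 11)))
    (hB : ∀ B ∈ D, B.card = 5)
    (hI : ∀ B ∈ D, ∀ B' ∈ D, B ≠ B' → (B ∩ B').card ≤ 2) :
    D.card ≤ 11 := by
  have hdeg : ∀ x : Fin 11, (D.filter (fun B => x ∈ B)).card ≤ 5 := by
    intro x
    have hinj : Set.InjOn (fun B : Finset (Fin 11) => B.erase x)
        ↑(D.filter (fun B => x ∈ B)) := by
      intro B hBm B' hBm' hEq
      simp only [coe_filter, Set.mem_setOf_eq] at hBm hBm'
      simp only at hEq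
      have : insert x (B.erase x) = insert x (B'.erase x) := by rw [hEq]
      rwa [Finset.insert_erase hBm.2, Finset.insert_erase hBm'.2] at this
    have hcard : ((D.filter (fun B => x ∈ B)).image (fun B => B.erase x)).card
        = (D.filter (fun B => x ∈ B)).card := Finset.card_image_of_injOn hinj
    rw [← hcard]
    apply packA ((Finset.univ : Finset (Fin 11)).erase x)
    · rw [Finset.card_erase_of_mem (mem_univ x)]
      simp
    · intro T hT
      obtain ⟨B, hBm, rfl⟩ := Finset.mem_image.mp hT
      simp only [mem_filter] at hBm
      constructor
      · intro a ha
        exact Finset.mem_erase.mpr ⟨ne_of_mem_erase ha, mem_univ a⟩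
      · rw [Finset.card_erase_of_mem hBm.2, hB B hBm.1]
    · intro T hT T' hT' hne
      obtain ⟨B, hBm, rfl⟩ := Finset.mem_image.mp hT
      obtain ⟨B', hBm', rfl⟩ := Finset.mem_image.mp hT'
      simp only [mem_filter] at hBm hBm'
      have hBB' : B ≠ B' := by rintro rfl; exact hne rfl
      have hxBB' : x ∈ B ∩ B' := mem_inter.mpr ⟨hBm.2, hBm'.2⟩
      have hEq : B.erase x ∩ B'.erase x = (B ∩ B').erase x := by
        ext a
        simp only [mem_inter, mem_erase]
        tauto
      rw [hEq, Finset.card_erase_of_mem hxBB']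
      have := hI B hBm.1 B' hBm'.1 hBB'
      omega
  have hsum : ∑ B ∈ D, B.card
      = ∑ x ∈ (Finset.univ : Finset (Fin 11)), (D.filter (fun B => x ∈ B)).card := by
    have h1 : ∀ B ∈ D, B.card = ∑ x ∈ (Finset.univ : Finset (Fin 11)),
        (if x ∈ B then 1 else 0) := by
      intro B _
      calc B.card = ((Finset.univ : Finset (Fin 11)).filter (fun x => x ∈ B)).card := by
            congr 1
            ext a
            simp
        _ = _ := card_filter _ _
    rw [Finset.sum_congr rfl h1, Finset.sum_comm]
    exact Finset.sum_congr rfl fun x _ => (card_filter _ _).symm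
  have htot : ∑ B ∈ D, B.card = 5 * D.card := by
    rw [Finset.sum_congr rfl hB, Finset.sum_const]
    ring
  have hbound : ∑ x ∈ (Finset.univ : Finset (Fin 11)),
      (D.filter (fun B => x ∈ B)).card ≤ 55 := by
    calc _ ≤ ∑ _x ∈ (Finset.univ : Finset (Fin 11)), 5 :=
          Finset.sum_le_sum fun x _ => hdeg x
      _ = 55 := by simp
  omega

lemma zmod2_ne_iff (a b : ZMod 2) : (a ≠ b) ↔ ¬((a ≠ 0) ↔ (b ≠ 0)) := by
  revert a b; decide

theorem stmt9 (C : Finset (Fin 11 → ZMod 2))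
    (hw : ∀ x ∈ C, hammingNorm x = 6)
    (hd : ∀ x ∈ C, ∀ y ∈ C, x ≠ y → 6 ≤ hammingDist x y) :
    C.card ≤ 11 ∧ C.card < 21 := by
  classical
  set supp : (Fin 11 → ZMod 2) → Finset (Fin 11) :=
    fun v => Finset.univ.filter (fun i => v i ≠ 0) with hsupp
  have hnorm : ∀ v : Fin 11 → ZMod 2, hammingNorm v = (supp v).card := by
    intro v
    rfl
  have hsuppinj : Function.Injective supp := by
    intro v w hvw
    funext i
    have : (v i ≠ 0) ↔ (w i ≠ 0) := by
      constructor
      · intro h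
        have : i ∈ supp v := by simp [hsupp, h]
        rw [hvw] at this
        simpa [hsupp] using this
      · intro h
        have : i ∈ supp w := by simp [hsupp, h]
        rw [← hvw] at this
        simpa [hsupp] using this
    by_cases hv : v i = 0
    · by_cases hw' : w i = 0
      · rw [hv, hw']
      · exact absurd (this.mpr hw') (by simp [hv])
    · have hw' : w i ≠ 0 := this.mp hv
      have e1 : v i = 1 := by
        have : ∀ a : ZMod 2, a ≠ 0 → a = 1 := by decide
        exact this _ hv
      have e2 : w i = 1 := by
        have : ∀ a : ZMod 2, a ≠ 0 → a = 1 := by decide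
        exact this _ hw'
      rw [e1, e2]
  -- distance vs supports
  have hdist : ∀ v w : Fin 11 → ZMod 2,
      hammingDist v w = ((supp v ∪ supp w) \ (supp v ∩ supp w)).card := by
    intro v w
    have : ({i | v i ≠ w i} : Finset (Fin 11))
        = (supp v ∪ supp w) \ (supp v ∩ supp w) := by
      ext i
      simp only [hsupp, mem_sdiff, mem_union, mem_inter,
        mem_filter, mem_univ, true_and]
      rw [zmod2_ne_iff (v i) (w i)]
      tauto
    rw [hammingDist, this]
  set D := C.image (fun v => (supp v)ᶜ) with hD
  have hDinj : Set.InjOn (fun v => (supp v)ᶜ) (C : Set (Fin 11 → ZMod 2)) := by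
    intro v _ w _ hvw
    apply hsuppinj
    simpa using congrArg compl hvw
  have hDcard : D.card = C.card := Finset.card_image_of_injOn hDinj
  have h11 : C.card ≤ 11 := by
    rw [← hDcard]
    apply packB
    · intro B hBm
      obtain ⟨v, hv, rfl⟩ := Finset.mem_image.mp hBm
      rw [Finset.card_compl]
      have := hw v hv
      rw [hnorm v] at this
      simp [this]
    · intro B hBm B' hBm' hne
      obtain ⟨v, hv, rfl⟩ := Finset.mem_image.mp hBm
      obtain ⟨w', hw', rfl⟩ := Finset.mem_image.mp hBm'
      have hvw : v ≠ w' := by rintro rfl; exact hne rfl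
      have hdvw := hd v hv w' hw' hvw
      rw [hdist v w'] at hdvw
      have hsub : supp v ∩ supp w' ⊆ supp v ∪ supp w' :=
        le_trans (inter_subset_left) (subset_union_left)
      rw [Finset.card_sdiff_of_subset hsub] at hdvw
      have hui : (supp v ∪ supp w').card + (supp v ∩ supp w').card = 12 := by
        rw [Finset.card_union_add_card_inter]
        have e1 : (supp v).card = 6 := by rw [← hnorm v]; exact hw v hv
        have e2 : (supp w').card = 6 := by rw [← hnorm w']; exact hw w' hw'
        rw [e1, e2]
      have hcap : (supp v ∩ supp w').card ≤ (supp v ∪ supp w').card :=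
        Finset.card_le_card hsub
      have hcompl : (supp v)ᶜ ∩ (supp w')ᶜ = (supp v ∪ supp w')ᶜ := by
        rw [Finset.compl_union]
      rw [hcompl, Finset.card_compl]
      have : (supp v ∪ supp w').card ≥ 9 := by omega
      have hc : Fintype.card (Fin 11) = 11 := by simp
      omega
  exact ⟨h11, by omega⟩
end
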